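/- Let E be a directed graph, {p_v, s_e} a Cuntz–Krieger E-family in a C*-algebra B with B generated as a C*-algebra by {p_v} ∪ {s_e}, let c : E¹ → ℝ satisfy c(e) > k for all e for some constant k > 0, and suppose c(μ) ≠ 1 for every path μ of positive length. Fix β > 0. If φ₁ and φ₂ are states on B satisfying the algebraic (σᶜ, β)-KMS condition and φ₁(s_μ s_ν*) = φ₂(s_μ s_ν*) for all paths μ, ν with |μ| = |ν| and s(μ) = s(ν), then φ₁ = φ₂. -/

import Mathlib

open scoped ComplexOrder

/-- A directed graph: vertex set `V`, edge set `E`, range and source maps. -/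
structure DirectedGraph (V : Type*) (E : Type*) where
  r : E → V
  s : E → V

namespace DirectedGraph

variable {V E : Type*}

/-- A finite path `μ = μ₁…μₙ` in a directed graph, recorded as the list of its
edges (in order) together with its range vertex; a path of length `0` is a single
vertex.  We require `s (μᵢ) = r (μᵢ₊₁)` and that the range vertex is `r (μ₁)`
when the path is nonempty. -/
structure Path (G : DirectedGraph V E) where
  rng : V
  edges : List E
  chain : edges.Chain' fun a b => G.s a = G.r b
  head_compat : ∀ e ∈ edges.head?, G.r e = rng

/-- The source `s(μ)` of a path. -/
def Path.src {G : DirectedGraph V E} (μ : G.Path) : V :=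
  μ.edges.getLast?.elim μ.rng G.s

/-- The length `|μ|` of a path. -/
def Path.length {G : DirectedGraph V E} (μ : G.Path) : ℕ := μ.edges.length

/-- The length-`0` path at a vertex. -/
def Path.ofVertex (G : DirectedGraph V E) (v : V) : G.Path :=
  ⟨v, [], by first | exact List.IsChain.nil | constructor | simp [List.Chain'], by simp⟩

/-- `ρ.IsComp μ ν` says that `ρ` is the concatenation `μν` (so in particular
`s(μ) = r(ν)`). -/
def Path.IsComp {G : DirectedGraph V E} (ρ μ ν : G.Path) : Prop :=
  μ.src = ν.rng ∧ ρ.edges = μ.edges ++ ν.edges ∧ ρ.rng = μ.rng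

/-- A vertex is singular if it receives no edges or infinitely many edges. -/
def Singular (G : DirectedGraph V E) (v : V) : Prop :=
  {e | G.r e = v} = ∅ ∨ {e | G.r e = v}.Infinite

end DirectedGraph

/-- A Cuntz–Krieger `E`-family in a `*`-algebra `B`: mutually orthogonal
projections `P v` and partial isometries `S e` with mutually orthogonal ranges,
subject to the Cuntz–Krieger relations. -/
structure CKFamily {V E : Type*} (G : DirectedGraph V E) (B : Type*)
    [NonUnitalRing B] [StarRing B] [PartialOrder B] where
  P : V → B
  S : E → B
  P_sa : ∀ v, star (P v) = P v
  P_idem : ∀ v, P v * P v = P v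
  P_orth : ∀ v w, v ≠ w → P v * P w = 0
  S_partialIsometry : ∀ e, S e * star (S e) * S e = S e
  range_orth : ∀ e f, e ≠ f → S e * star (S e) * (S f * star (S f)) = 0
  ck1 : ∀ e, star (S e) * S e = P (G.s e)
  ck2 : ∀ e, S e * star (S e) ≤ P (G.r e)
  ck3 : ∀ v (h : {e | G.r e = v}.Finite), {e | G.r e = v}.Nonempty →
    P v = ∑ e ∈ h.toFinset, S e * star (S e)

namespace CKFamily

variable {V E B : Type*} {G : DirectedGraph V E}

section Algebraic

variable [NonUnitalRing B] [StarRing B] [PartialOrder B]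

/-- `s_μ = s_{μ₁} ⋯ s_{μₙ}` for a path `μ`, with `s_v = p_v` for a vertex. -/
def sP (F : CKFamily G B) (μ : G.Path) : B :=
  match μ.edges with
  | [] => F.P μ.rng
  | e :: es => es.foldl (fun b f => b * F.S f) (F.S e)

end Algebraic

section CStar

variable [NonUnitalNormedRing B] [StarRing B] [PartialOrder B]
  [NormedSpace ℂ B] [IsScalarTower ℂ B B] [SMulCommClass ℂ B B] [StarModule ℂ B]

/-- The submodule `F_k` = closed span of `{s_μ s_ν* : μ, ν ∈ Eᵏ, s(μ) = s(ν)}`. -/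
def FkSub (F : CKFamily G B) (k : ℕ) : Submodule ℂ B :=
  (Submodule.span ℂ {x : B | ∃ μ ν : G.Path, μ.length = k ∧ ν.length = k ∧
    μ.src = ν.src ∧ x = F.sP μ * star (F.sP ν)}).topologicalClosure

/-- The set `F_k`. -/
def Fk (F : CKFamily G B) (k : ℕ) : Set B := ↑(F.FkSub k)

/-- `ℰ_k` = closed span of `{s_μ s_ν* : μ, ν ∈ Eᵏ, s(μ) = s(ν) singular}`. -/
def Ek (F : CKFamily G B) (k : ℕ) : Set B :=
  ↑((Submodule.span ℂ {x : B | ∃ μ ν : G.Path, μ.length = k ∧ ν.length = k ∧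
    μ.src = ν.src ∧ G.Singular μ.src ∧
    x = F.sP μ * star (F.sP ν)}).topologicalClosure)

/-- `C_k = F_0 + ⋯ + F_k`. -/
def Ck (F : CKFamily G B) (k : ℕ) : Set B :=
  {x : B | ∃ f : Fin (k + 1) → B, (∀ i : Fin (k + 1), f i ∈ F.Fk i) ∧ x = ∑ i, f i}

/-- The submodule given by the closed span of
`{s_μ s_ν* : μ, ν ∈ E*, |μ| = |ν|, s(μ) = s(ν)}` (the "core"). -/
def coreSub (F : CKFamily G B) : Submodule ℂ B :=
  (Submodule.span ℂ {x : B | ∃ μ ν : G.Path, μ.length = ν.length ∧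
    μ.src = ν.src ∧ x = F.sP μ * star (F.sP ν)}).topologicalClosure

/-- A gauge action for a Cuntz–Krieger family: a point-norm continuous action of
the circle group by `*`-automorphisms fixing the `P v` and scaling the `S e`. -/
structure GaugeAction (F : CKFamily G B) where
  γ : Circle → B →L[ℂ] B
  map_one : γ 1 = ContinuousLinearMap.id ℂ B
  map_mul : ∀ z w, γ (z * w) = (γ z).comp (γ w)
  mul_hom : ∀ z (x y : B), γ z (x * y) = γ z x * γ z y
  star_hom : ∀ z (x : B), γ z (star x) = star (γ z x)
  cont : ∀ x : B, Continuous fun z => γ z x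
  gauge_P : ∀ z v, γ z (F.P v) = F.P v
  gauge_S : ∀ z e, γ z (F.S e) = (z : ℂ) • F.S e

/-- The fixed point algebra of a gauge action. -/
def GaugeAction.fixed {F : CKFamily G B} (γ : GaugeAction F) : Set B :=
  {a : B | ∀ z, γ.γ z a = a}

/-- `B` is generated, as a C*-algebra, by the family. -/
def Generates (F : CKFamily G B) : Prop :=
  closure (↑(NonUnitalStarAlgebra.adjoin ℂ
    (Set.range F.P ∪ Set.range F.S)) : Set B) = Set.univ

/-- The universality hypotheses: all vertex projections are nonzero, `B` is
generated by the family, and `B` carries a gauge action. -/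
def IsUniversal (F : CKFamily G B) : Prop :=
  (∀ v, F.P v ≠ 0) ∧ F.Generates ∧ Nonempty (GaugeAction F)

end CStar

end CKFamily

section States

variable {B : Type*} [NonUnitalNormedRing B] [StarRing B] [PartialOrder B]
  [NormedSpace ℂ B]

/-- A state: a positive continuous linear functional of norm one. -/
def IsStateOn (φ : B →L[ℂ] ℂ) : Prop :=
  ‖φ‖ = 1 ∧ ∀ x : B, 0 ≤ x → 0 ≤ φ x

end States

/-- `c(μ) = c(μ₁) ⋯ c(μₙ)`, with `c(v) = 1` for a vertex. -/
def cPath {V E : Type*} {G : DirectedGraph V E} (c : E → ℝ) (μ : G.Path) : ℝ :=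
  (μ.edges.map c).prod

/-- The algebraic `(σᶜ, β)`-KMS condition, checked on spanning elements. -/
def KMSCondition {V E B : Type*} {G : DirectedGraph V E}
    [NonUnitalNormedRing B] [StarRing B] [PartialOrder B] [NormedSpace ℂ B]
    (F : CKFamily G B) (c : E → ℝ) (β : ℝ) (φ : B →L[ℂ] ℂ) : Prop :=
  ∀ μ ν α η : G.Path, μ.src = ν.src → α.src = η.src →
    φ (F.sP μ * star (F.sP ν) * (F.sP α * star (F.sP η))) =
      Complex.ofReal (cPath c μ ^ (-β) * cPath c ν ^ β) *
        φ (F.sP α * star (F.sP η) * (F.sP μ * star (F.sP ν)))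

/-!
The products `s_μ s_ν*` with `s(μ) = s(ν)` span a dense `*`-subalgebra: by the Cuntz–Krieger
relations `s_ν* s_α` is `0`, or `s_m` when `α = νm`, or `s_m*` when `ν = αm`, so a product of two
such elements is again one of them or `0`. A continuous functional is therefore determined by its
values on them, and for a KMS state these vanish when `|μ| ≠ |ν|`. Indeed, for `x = s_μ s_ν*` the
KMS condition for the pair `x, s_ν s_ν*` (or `x, s_μ s_μ*` when `μ` is the shorter path) reads
`φ(x) = λ φ(x)` or `φ(x) = 0`, where `λ = c(μ)^{-β} c(ν)^β ≠ 1` because `c(μ)` and `c(ν)` differ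
by a factor `c(m) ≠ 1`.
-/

namespace DirectedGraph.Path

variable {V E : Type*} {G : DirectedGraph V E}

theorem ext {μ ν : G.Path} (hrng : μ.rng = ν.rng) (hedges : μ.edges = ν.edges) : μ = ν := by
  cases μ; cases ν; cases hrng; cases hedges; rfl

def cons (e : E) (μ : G.Path) (h : G.s e = μ.rng) : G.Path where
  rng := G.r e
  edges := e :: μ.edges
  chain := List.isChain_cons.mpr ⟨fun f hf => h.trans (μ.head_compat f hf).symm, μ.chain⟩
  head_compat := by simp

@[elab_as_elim]
theorem induction {motive : G.Path → Prop} (ofVertex : ∀ v, motive (ofVertex G v))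
    (cons : ∀ e μ (h : G.s e = μ.rng), motive μ → motive (cons e μ h)) (μ : G.Path) :
    motive μ := by
  obtain ⟨v, l, hchain, hhead⟩ := μ
  induction l generalizing v with
  | nil => exact ofVertex v
  | cons e es ih =>
    obtain ⟨hlink, htail⟩ := List.isChain_cons.mp hchain
    obtain rfl : G.r e = v := hhead e rfl
    exact cons e ⟨G.s e, es, htail, fun f hf => (hlink f hf).symm⟩ rfl (ih _ _ _)

theorem src_cons (e : E) (μ : G.Path) (h : G.s e = μ.rng) : (cons e μ h).src = μ.src := by
  obtain ⟨v, l, hchain, hhead⟩ := μ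
  cases l with
  | nil => exact h
  | cons f fs =>
    change ((e :: f :: fs).getLast?).elim _ _ = ((f :: fs).getLast?).elim _ _
    rw [List.getLast?_cons_cons, List.getLast?_eq_some_getLast (l := f :: fs) (by simp)]
    rfl

theorem isComp_ofVertex (μ : G.Path) : μ.IsComp (ofVertex G μ.rng) μ := ⟨rfl, rfl, rfl⟩

theorem IsComp.unique {ρ ρ' μ ν : G.Path} (h : ρ.IsComp μ ν) (h' : ρ'.IsComp μ ν) : ρ = ρ' :=
  ext (h.2.2.trans h'.2.2.symm) (h.2.1.trans h'.2.1.symm)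

theorem IsComp.cons {ρ μ ν : G.Path} (h : ρ.IsComp μ ν) (e : E) (hρ : G.s e = ρ.rng)
    (hμ : G.s e = μ.rng) : (cons e ρ hρ).IsComp (cons e μ hμ) ν :=
  ⟨(src_cons e μ hμ).trans h.1, by simp [Path.cons, h.2.1], rfl⟩

theorem exists_isComp {μ ν : G.Path} (h : μ.src = ν.rng) : ∃ ρ : G.Path, ρ.IsComp μ ν := by
  induction μ using Path.induction with
  | ofVertex v =>
    obtain rfl : v = ν.rng := h
    exact ⟨ν, isComp_ofVertex ν⟩
  | cons e μ he ih =>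
    obtain ⟨ρ, hρ⟩ := ih ((src_cons e μ he).symm.trans h)
    exact ⟨cons e ρ (he.trans hρ.2.2.symm), hρ.cons e _ he⟩

theorem IsComp.src_eq {ρ μ ν : G.Path} (h : ρ.IsComp μ ν) : ρ.src = ν.src := by
  induction μ using Path.induction generalizing ρ with
  | ofVertex v =>
    obtain rfl : v = ν.rng := h.1
    rw [h.unique (isComp_ofVertex ν)]
  | cons e μ he ih =>
    obtain ⟨ρ', hρ'⟩ := exists_isComp ((src_cons e μ he).symm.trans h.1)
    rw [h.unique (hρ'.cons e (he.trans hρ'.2.2.symm) he), src_cons, ih hρ']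

theorem IsComp.length_eq {ρ μ ν : G.Path} (h : ρ.IsComp μ ν) :
    ρ.length = μ.length + ν.length := by
  simp [length, h.2.1]

end DirectedGraph.Path

open DirectedGraph

section PathWeights

variable {V E : Type*} {G : DirectedGraph V E} {c : E → ℝ}

theorem cPath_pos (hc : ∀ e, 0 < c e) (μ : G.Path) : 0 < cPath c μ :=
  List.prod_pos (by simpa using fun e _ => hc e)

theorem DirectedGraph.Path.IsComp.cPath_eq {ρ μ ν : G.Path} (h : ρ.IsComp μ ν) :
    cPath c ρ = cPath c μ * cPath c ν := by
  simp [cPath, h.2.1]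

theorem DirectedGraph.Path.IsComp.cPath_ne (hc : ∀ e, 0 < c e)
    (hc1 : ∀ μ : G.Path, 0 < μ.length → cPath c μ ≠ 1) {ρ μ ν : G.Path} (h : ρ.IsComp μ ν)
    (hlen : ρ.length ≠ μ.length) : cPath c ρ ≠ cPath c μ := by
  rw [h.cPath_eq, Ne, mul_eq_left₀ (cPath_pos hc μ).ne']
  exact hc1 ν (by rw [h.length_eq] at hlen; omega)

end PathWeights

theorem Real.rpow_neg_mul_rpow_ne_one {a b β : ℝ} (ha : 0 < a) (hb : 0 < b) (hab : a ≠ b)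
    (hβ : β ≠ 0) : a ^ (-β) * b ^ β ≠ 1 := by
  rw [Real.rpow_neg ha.le, Ne, inv_mul_eq_one₀ (Real.rpow_pos_of_pos ha β).ne',
    Real.rpow_left_inj ha.le hb.le hβ]
  exact hab

namespace CKFamily

variable {V E B : Type*} {G : DirectedGraph V E}

section Algebraic

variable [NonUnitalRing B] [StarRing B] [PartialOrder B] (F : CKFamily G B)

theorem S_mul_P_src (e : E) : F.S e * F.P (G.s e) = F.S e := by
  rw [← F.ck1, ← mul_assoc, F.S_partialIsometry]

theorem star_S_mul_S_of_ne {e f : E} (h : e ≠ f) : star (F.S e) * F.S f = 0 := by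
  have he : star (F.S e) = star (F.S e) * (F.S e * star (F.S e)) := by
    conv_lhs => rw [← F.S_partialIsometry e]
    rw [star_mul, star_mul, star_star]
  rw [he, ← F.S_partialIsometry f, mul_assoc, ← mul_assoc (F.S e * star (F.S e)),
    F.range_orth e f h, zero_mul, mul_zero]

theorem sP_ofVertex (v : V) : F.sP (Path.ofVertex G v) = F.P v := rfl

theorem foldl_mul_S (x y : B) (l : List E) :
    l.foldl (fun b f => b * F.S f) (x * y) = x * l.foldl (fun b f => b * F.S f) y := by
  induction l generalizing y with
  | nil => rfl
  | cons f fs ih => simpa [mul_assoc] using ih (y * F.S f)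

theorem sP_cons (e : E) (μ : G.Path) (h : G.s e = μ.rng) :
    F.sP (Path.cons e μ h) = F.S e * F.sP μ := by
  obtain ⟨v, l, hchain, hhead⟩ := μ
  cases l with
  | nil =>
    change F.S e = F.S e * F.P v
    rw [← show G.s e = v from h, F.S_mul_P_src]
  | cons f fs => exact F.foldl_mul_S (F.S e) (F.S f) fs

theorem sP_mul_P_src (μ : G.Path) : F.sP μ * F.P μ.src = F.sP μ := by
  induction μ using Path.induction with
  | ofVertex v => exact F.P_idem v
  | cons e μ h ih => rw [sP_cons, Path.src_cons, mul_assoc, ih]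

def monomials : Set B :=
  {x | ∃ μ ν : G.Path, μ.src = ν.src ∧ F.sP μ * star (F.sP ν) = x}

theorem P_mem_monomials (v : V) : F.P v ∈ F.monomials :=
  ⟨Path.ofVertex G v, Path.ofVertex G v, rfl, by rw [sP_ofVertex, F.P_sa, F.P_idem]⟩

theorem S_mem_monomials (e : E) : F.S e ∈ F.monomials := by
  refine ⟨Path.cons e (Path.ofVertex G (G.s e)) (by rfl), Path.ofVertex G (G.s e),
    Path.src_cons _ _ _, ?_⟩
  change F.S e * star (F.P (G.s e)) = F.S e
  rw [F.P_sa, F.S_mul_P_src]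

theorem star_mem_monomials {x : B} (hx : x ∈ F.monomials) : star x ∈ F.monomials := by
  obtain ⟨μ, ν, hsrc, rfl⟩ := hx
  exact ⟨ν, μ, hsrc.symm, by rw [star_mul, star_star]⟩

end Algebraic

section CStar

variable [NonUnitalNormedRing B] [StarRing B] [PartialOrder B] [NormedSpace ℂ B]
  [IsScalarTower ℂ B B] [SMulCommClass ℂ B B] [StarModule ℂ B] [CStarRing B] [CompleteSpace B]
  [StarOrderedRing B] (F : CKFamily G B)

theorem P_rng_mul_S (e : E) : F.P (G.r e) * F.S e = F.S e := by
  let _ : NonUnitalCStarAlgebra B := {}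
  have hP : IsStarProjection (F.P (G.r e)) := ⟨F.P_idem _, F.P_sa _⟩
  have hSS : IsStarProjection (F.S e * star (F.S e)) :=
    ⟨by rw [IsIdempotentElem, ← mul_assoc, F.S_partialIsometry], .mul_star_self _⟩
  have hrange := (hSS.le_iff_mul_eq_right hP).mp (F.ck2 e)
  calc F.P (G.r e) * F.S e = F.P (G.r e) * (F.S e * star (F.S e)) * F.S e := by
        rw [mul_assoc, F.S_partialIsometry]
    _ = F.S e := by rw [hrange, F.S_partialIsometry]

theorem P_rng_mul_sP (μ : G.Path) : F.P μ.rng * F.sP μ = F.sP μ := by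
  induction μ using Path.induction with
  | ofVertex v => exact F.P_idem v
  | cons e μ h _ => rw [sP_cons, ← mul_assoc]; exact congrArg (· * F.sP μ) (F.P_rng_mul_S e)

theorem P_mul_sP_of_ne {v : V} {μ : G.Path} (h : v ≠ μ.rng) : F.P v * F.sP μ = 0 := by
  rw [← F.P_rng_mul_sP, ← mul_assoc, F.P_orth _ _ h, zero_mul]

theorem star_sP_mul_sP_self (μ : G.Path) : star (F.sP μ) * F.sP μ = F.P μ.src := by
  induction μ using Path.induction with
  | ofVertex v => exact (congrArg (· * F.P v) (F.P_sa v)).trans (F.P_idem v)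
  | cons e μ h ih =>
    rw [sP_cons, star_mul, mul_assoc, ← mul_assoc (star (F.S e)), F.ck1, h, F.P_rng_mul_sP, ih,
      Path.src_cons]

theorem sP_mul_star_sP_mul_sP (μ : G.Path) : F.sP μ * star (F.sP μ) * F.sP μ = F.sP μ := by
  rw [mul_assoc, star_sP_mul_sP_self, sP_mul_P_src]

theorem sP_eq_mul_of_isComp {ρ μ ν : G.Path} (h : ρ.IsComp μ ν) :
    F.sP ρ = F.sP μ * F.sP ν := by
  induction μ using Path.induction generalizing ρ with
  | ofVertex v =>
    obtain rfl : v = ν.rng := h.1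
    rw [h.unique (Path.isComp_ofVertex ν), sP_ofVertex, P_rng_mul_sP]
  | cons e μ he ih =>
    obtain ⟨ρ', hρ'⟩ := Path.exists_isComp ((Path.src_cons e μ he).symm.trans h.1)
    rw [h.unique (hρ'.cons e (he.trans hρ'.2.2.symm) he), sP_cons, sP_cons, ih hρ', mul_assoc]

theorem star_sP_mul_sP_trichotomy (μ ν : G.Path) :
    star (F.sP μ) * F.sP ν = 0 ∨
      (∃ m, ν.IsComp μ m ∧ star (F.sP μ) * F.sP ν = F.sP m) ∨
      (∃ m, μ.IsComp ν m ∧ star (F.sP μ) * F.sP ν = star (F.sP m)) := by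
  induction μ using Path.induction generalizing ν with
  | ofVertex v =>
    rw [sP_ofVertex, F.P_sa]
    by_cases hv : v = ν.rng
    · subst hv
      exact Or.inr (Or.inl ⟨ν, Path.isComp_ofVertex ν, F.P_rng_mul_sP ν⟩)
    · exact Or.inl (F.P_mul_sP_of_ne hv)
  | cons e μ he ih =>
    induction ν using Path.induction with
    | ofVertex w =>
      have hstar : star (F.sP (Path.cons e μ he)) * F.sP (Path.ofVertex G w) =
          star (F.P w * F.sP (Path.cons e μ he)) := by
        rw [sP_ofVertex, star_mul, F.P_sa]
      rw [hstar]
      by_cases hw : w = G.r e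
      · subst hw
        exact Or.inr (Or.inr ⟨_, Path.isComp_ofVertex _,
          congrArg star (F.P_rng_mul_sP (Path.cons e μ he))⟩)
      · rw [F.P_mul_sP_of_ne hw, star_zero]
        exact Or.inl rfl
    | cons f ν hf _ =>
      rw [sP_cons, sP_cons, star_mul, mul_assoc, ← mul_assoc (star (F.S e))]
      by_cases hef : e = f
      · subst hef
        rw [F.ck1, hf, F.P_rng_mul_sP]
        rcases ih ν with h0 | ⟨m, hm, h⟩ | ⟨m, hm, h⟩
        · exact Or.inl h0
        · exact Or.inr (Or.inl ⟨m, hm.cons e hf he, h⟩)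
        · exact Or.inr (Or.inr ⟨m, hm.cons e he hf, h⟩)
      · rw [F.star_S_mul_S_of_ne hef, zero_mul, mul_zero]
        exact Or.inl rfl

theorem mul_mem_insert_zero_monomials {x y : B} (hx : x ∈ F.monomials) (hy : y ∈ F.monomials) :
    x * y ∈ insert 0 F.monomials := by
  obtain ⟨μ, ν, hμν, rfl⟩ := hx
  obtain ⟨α, η, hαη, rfl⟩ := hy
  rw [show F.sP μ * star (F.sP ν) * (F.sP α * star (F.sP η)) =
      F.sP μ * (star (F.sP ν) * F.sP α) * star (F.sP η) by simp only [mul_assoc]]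
  rcases F.star_sP_mul_sP_trichotomy ν α with h0 | ⟨m, hm, h⟩ | ⟨m, hm, h⟩
  · left
    rw [h0, mul_zero, zero_mul]
  · obtain ⟨ρ, hρ⟩ := Path.exists_isComp (hμν.trans hm.1)
    exact Or.inr ⟨ρ, η, hρ.src_eq.trans (hm.src_eq.symm.trans hαη),
      by rw [h, F.sP_eq_mul_of_isComp hρ]⟩
  · obtain ⟨ρ, hρ⟩ := Path.exists_isComp (hαη.symm.trans hm.1)
    exact Or.inr ⟨μ, ρ, hμν.trans (hm.src_eq.trans hρ.src_eq.symm),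
      by rw [h, F.sP_eq_mul_of_isComp hρ, star_mul, mul_assoc]⟩

def monomialSemigroup : Subsemigroup B where
  carrier := insert 0 F.monomials
  mul_mem' := by
    rintro x y (rfl | hx) (rfl | hy)
    · exact Or.inl (mul_zero 0)
    · exact Or.inl (zero_mul y)
    · exact Or.inl (mul_zero x)
    · exact F.mul_mem_insert_zero_monomials hx hy

theorem adjoin_subset_span_monomials :
    (NonUnitalStarAlgebra.adjoin ℂ (Set.range F.P ∪ Set.range F.S) : Set B) ⊆
      Submodule.span ℂ F.monomials := by
  have hgen : Set.range F.P ∪ Set.range F.S ⊆ F.monomials := by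
    rintro _ (⟨v, rfl⟩ | ⟨e, rfl⟩)
    exacts [F.P_mem_monomials v, F.S_mem_monomials e]
  have hclosure : Subsemigroup.closure ((Set.range F.P ∪ Set.range F.S) ∪
      star (Set.range F.P ∪ Set.range F.S)) ≤ F.monomialSemigroup := by
    rw [Subsemigroup.closure_le]
    rintro x (hx | hx)
    · exact Or.inr (hgen hx)
    · exact Or.inr (star_star x ▸ F.star_mem_monomials (hgen hx))
  intro x hx
  change x ∈ (NonUnitalAlgebra.adjoin ℂ _).toSubmodule at hx
  rw [NonUnitalAlgebra.adjoin_eq_span] at hx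
  rw [← Submodule.span_insert_zero]
  exact Submodule.span_mono hclosure hx

theorem dense_span_monomials (hgen : F.Generates) :
    Dense (Submodule.span ℂ F.monomials : Set B) :=
  (dense_iff_closure_eq.mpr hgen).mono F.adjoin_subset_span_monomials

end CStar

end CKFamily

theorem KMSCondition.apply_sP_mul_star_sP_eq_zero {V E B : Type*} [NonUnitalNormedRing B]
    [StarRing B] [PartialOrder B] [NormedSpace ℂ B] [IsScalarTower ℂ B B]
    [SMulCommClass ℂ B B] [StarModule ℂ B] [CStarRing B] [CompleteSpace B]
    [StarOrderedRing B] {G : DirectedGraph V E} {F : CKFamily G B} {c : E → ℝ} {β : ℝ}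
    {φ : B →L[ℂ] ℂ} (hφ : KMSCondition F c β φ) (hc : ∀ e, 0 < c e)
    (hc1 : ∀ μ : G.Path, 0 < μ.length → cPath c μ ≠ 1) (hβ : β ≠ 0) {μ ν : G.Path}
    (hsrc : μ.src = ν.src) (hlen : μ.length ≠ ν.length) :
    φ (F.sP μ * star (F.sP ν)) = 0 := by
  have hvanish : cPath c μ ≠ cPath c ν →
      φ (F.sP μ * star (F.sP ν)) =
        (cPath c μ ^ (-β) * cPath c ν ^ β : ℝ) * φ (F.sP μ * star (F.sP ν)) →
      φ (F.sP μ * star (F.sP ν)) = 0 := fun hne h => by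
    by_contra hx
    exact Real.rpow_neg_mul_rpow_ne_one (cPath_pos hc μ) (cPath_pos hc ν) hne hβ
      (Complex.ofReal_eq_one.mp ((mul_eq_right₀ hx).mp h.symm))
  have hassoc : ∀ a b c d : B, a * b * (c * d) = a * (b * c) * d := by
    intro a b c d; simp only [mul_assoc]
  have hright : F.sP μ * star (F.sP ν) * (F.sP ν * star (F.sP ν)) = F.sP μ * star (F.sP ν) :=
    calc F.sP μ * star (F.sP ν) * (F.sP ν * star (F.sP ν))
        = F.sP μ * star (F.sP ν * star (F.sP ν) * F.sP ν) := by
          rw [star_mul, star_mul, star_star, mul_assoc]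
      _ = F.sP μ * star (F.sP ν) := by rw [F.sP_mul_star_sP_mul_sP]
  have hleft : F.sP μ * star (F.sP μ) * (F.sP μ * star (F.sP ν)) = F.sP μ * star (F.sP ν) := by
    rw [← mul_assoc, F.sP_mul_star_sP_mul_sP]
  rcases F.star_sP_mul_sP_trichotomy ν μ with h0 | ⟨m, hm, h⟩ | ⟨m, hm, h⟩
  · have := hφ μ ν ν ν hsrc rfl
    rwa [hright, hassoc, h0, mul_zero, zero_mul, map_zero, mul_zero] at this
  · refine hvanish (hm.cPath_ne hc hc1 hlen) ?_
    have := hφ μ ν ν ν hsrc rfl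
    rwa [hright, hassoc, h, ← F.sP_eq_mul_of_isComp hm] at this
  · refine hvanish (hm.cPath_ne hc hc1 hlen.symm).symm ?_
    have := hφ μ ν μ μ hsrc rfl
    rwa [hleft, hassoc, h, mul_assoc, ← star_mul, ← F.sP_eq_mul_of_isComp hm] at this

theorem KMS_state_determined_by_core_general {V E B : Type*} [NonUnitalNormedRing B]
    [StarRing B] [PartialOrder B] [NormedSpace ℂ B] [IsScalarTower ℂ B B]
    [SMulCommClass ℂ B B] [StarModule ℂ B] [CStarRing B] [CompleteSpace B]
    [StarOrderedRing B]
    (G : DirectedGraph V E) (F : CKFamily G B) (hgen : F.Generates)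
    (c : E → ℝ) (k₀ : ℝ) (hk₀ : 0 < k₀) (hc : ∀ e, k₀ < c e)
    (hc1 : ∀ μ : G.Path, 0 < μ.length → cPath c μ ≠ 1)
    (β : ℝ) (hβ : 0 < β) (φ₁ φ₂ : B →L[ℂ] ℂ)
    (hKMS₁ : KMSCondition F c β φ₁) (hKMS₂ : KMSCondition F c β φ₂)
    (hagree : ∀ μ ν : G.Path, μ.length = ν.length → μ.src = ν.src →
      φ₁ (F.sP μ * star (F.sP ν)) = φ₂ (F.sP μ * star (F.sP ν))) :
    φ₁ = φ₂ := by
  have hcpos : ∀ e, 0 < c e := fun e => hk₀.trans (hc e)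
  refine ContinuousLinearMap.ext_on (F.dense_span_monomials hgen) ?_
  rintro _ ⟨μ, ν, hsrc, rfl⟩
  by_cases hlen : μ.length = ν.length
  · exact hagree μ ν hlen hsrc
  · rw [hKMS₁.apply_sP_mul_star_sP_eq_zero hcpos hc1 hβ.ne' hsrc hlen,
      hKMS₂.apply_sP_mul_star_sP_eq_zero hcpos hc1 hβ.ne' hsrc hlen]

/-- two `(σᶜ, β)`-KMS states that agree on the elements
`s_μ s_ν*` with `|μ| = |ν|`, `s(μ) = s(ν)` are equal. -/
theorem KMS_state_determined_by_core {V E B : Type*} [NonUnitalNormedRing B]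
    [StarRing B] [PartialOrder B] [NormedSpace ℂ B] [IsScalarTower ℂ B B]
    [SMulCommClass ℂ B B] [StarModule ℂ B] [CStarRing B] [CompleteSpace B]
    [StarOrderedRing B]
    (G : DirectedGraph V E) (F : CKFamily G B) (hgen : F.Generates)
    (c : E → ℝ) (k₀ : ℝ) (hk₀ : 0 < k₀) (hc : ∀ e, k₀ < c e)
    (hc1 : ∀ μ : G.Path, 0 < μ.length → cPath c μ ≠ 1)
    (β : ℝ) (hβ : 0 < β) (φ₁ φ₂ : B →L[ℂ] ℂ)
    (h₁ : IsStateOn φ₁) (h₂ : IsStateOn φ₂)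
    (hKMS₁ : KMSCondition F c β φ₁) (hKMS₂ : KMSCondition F c β φ₂)
    (hagree : ∀ μ ν : G.Path, μ.length = ν.length → μ.src = ν.src →
      φ₁ (F.sP μ * star (F.sP ν)) = φ₂ (F.sP μ * star (F.sP ν))) :
    φ₁ = φ₂ :=
  KMS_state_determined_by_core_general G F hgen c k₀ hk₀ hc hc1 β hβ φ₁ φ₂ hKMS₁ hKMS₂ hagree
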